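/- For t-bit integers α, β with bits α_i, β_i ∈ {0,1}, the MSB formula Σ_{i=1}^t [ α_i(1−β_i) · Π_{j=i+1}^t (1 − α_j − β_j + 2 α_j β_j) ] equals 1 if α > β and 0 otherwise. -/

import Mathlib

/-! Let `A`, `B` be the numbers formed by the low `t` bits. Adding a new top bit `x` to `A` and
`y` to `B` gives `A + 2ᵗ x > B + 2ᵗ y` iff `x > y`, or `x = y` and `A > B`, because `A, B < 2ᵗ`.
The formula obeys the same recursion: its value for `t + 1` bits is its value for `t` bits times
`1 - x - y + 2xy = [x = y]`, plus `x (1 - y) = [x > y]`. -/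

namespace Finset

theorem sum_mul_prod_Ico_succ {R : Type*} [CommSemiring R] (g e : ℕ → R) (t : ℕ) :
    ∑ i ∈ range (t + 1), g i * ∏ j ∈ Ico (i + 1) (t + 1), e j =
      (∑ i ∈ range t, g i * ∏ j ∈ Ico (i + 1) t, e j) * e t + g t := by
  rw [sum_range_succ, Ico_self, prod_empty, mul_one, sum_mul]
  congr 1
  refine sum_congr rfl fun i hi => ?_
  rw [prod_Ico_succ_top (by simpa using hi), mul_assoc]

end Finset

section Bits

variable {a : ℕ → ℤ}

theorem sum_two_pow_mul_bits_nonneg (ha : ∀ i, a i = 0 ∨ a i = 1) (t : ℕ) :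
    0 ≤ ∑ i ∈ Finset.range t, 2 ^ i * a i :=
  Finset.sum_nonneg fun i _ => by rcases ha i with h | h <;> simp [h]

theorem sum_two_pow_mul_bits_lt (ha : ∀ i, a i = 0 ∨ a i = 1) (t : ℕ) :
    ∑ i ∈ Finset.range t, 2 ^ i * a i < 2 ^ t := by
  induction t with
  | zero => simp
  | succ t ih =>
    rw [Finset.sum_range_succ, pow_succ]
    have : (0 : ℤ) < 2 ^ t := by positivity
    rcases ha t with h | h <;> simp only [h] <;> linarith

end Bits

theorem add_mul_lt_add_mul_iff_lex {N A B x y : ℤ} (hA : 0 ≤ A) (hA' : A < N) (hB : 0 ≤ B)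
    (hB' : B < N) : A + N * x < B + N * y ↔ x < y ∨ x = y ∧ A < B := by
  rcases lt_trichotomy x y with hxy | rfl | hxy
  · have : N * x + N ≤ N * y := by nlinarith
    exact ⟨fun _ => Or.inl hxy, fun _ => by linarith⟩
  · simp
  · have : N * y + N ≤ N * x := by nlinarith
    exact ⟨fun _ => by linarith, fun h => by rcases h with h | ⟨h, _⟩ <;> omega⟩

/-- MSB comparison formula:
    Σ_i α_i(1−β_i)·Π_{j>i}(1 − α_j − β_j + 2α_jβ_j) is the indicator of α > β. -/
theorem msb_comparison (t : ℕ) (a b : ℕ → ℤ)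
    (ha : ∀ i, a i = 0 ∨ a i = 1) (hb : ∀ i, b i = 0 ∨ b i = 1) :
    (∑ i ∈ Finset.range t,
        a i * (1 - b i) *
          ∏ j ∈ Finset.Ico (i + 1) t, (1 - a j - b j + 2 * a j * b j)) =
      if (∑ i ∈ Finset.range t, 2 ^ i * a i) > (∑ i ∈ Finset.range t, 2 ^ i * b i)
      then 1 else 0 := by
  induction t with
  | zero => simp
  | succ t ih =>
    rw [Finset.sum_mul_prod_Ico_succ, ih, Finset.sum_range_succ, Finset.sum_range_succ]
    simp only [gt_iff_lt, add_mul_lt_add_mul_iff_lex (sum_two_pow_mul_bits_nonneg hb t)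
      (sum_two_pow_mul_bits_lt hb t) (sum_two_pow_mul_bits_nonneg ha t)
      (sum_two_pow_mul_bits_lt ha t)]
    rcases ha t with h | h <;> rcases hb t with h' | h' <;> simp [h, h']
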